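/- Let A and H be Lie bialgebras, ▷ : H × A → A and ◁ : H × A → H bilinear maps, and σ : H × H → A, θ : A × A → H antisymmetric bilinear maps, such that (A, H, ▷, ◁, σ, θ) is a cocycle cross product system (i.e. conditions (CC1), (CC2), (TM1), (TM2), (TBB1), (TBB2) hold, together with (CC5): [[h,g],l] + [[g,l],h] + [[l,h],g] = h ◁ σ(g,l) + g ◁ σ(l,h) + l ◁ σ(h,g) and (CC6): [[a,b],c] + [[b,c],a] + [[c,a],b] = θ(a,b) ▷ c + θ(b,c) ▷ a + θ(c,a) ▷ b, whose left-hand sides vanish since A and H are Lie algebras), and assume in addition: h₁ ⊗ h₂ ▷ a + h ◁ a₁ ⊗ a₂ = 0 in H ⊗ A; δ_A(h ▷ a) = h ▷ a₁ ⊗ a₂ + a₁ ⊗ h ▷ a₂; δ_H(h ◁ a) = h₁ ⊗ h₂ ◁ a + h₁ ◁ a ⊗ h₂; θ(a, b₁) ⊗ b₂ + θ(a₁, b) ⊗ a₂ = 0 in H ⊗ A; h₁ ⊗ σ(h₂, g) + g₁ ⊗ σ(h, g₂) = 0 in H ⊗ A; δ_H(θ(a,b)) = 0; δ_A(σ(h,g))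 = 0, for all a, b ∈ A, h, g ∈ H. Then the vector space A ⊕ H with bracket [(a,h),(b,g)] = ([a,b] + h ▷ b − g ▷ a + σ(h,g), [h,g] + h ◁ b − g ◁ a + θ(a,b)) and the direct sum cobracket δ(a,h) = δ_A(a) + δ_H(h) is a Lie bialgebra (the double cocycle cross product A_{▷,θ} # _{◁,σ} H). -/

import Mathlib

/-!
Bracket and cobracket are bilinear, so the Jacobi identity on `A ⊕ H` may be checked on
homogeneous triples, of which there are four kinds up to cyclic permutation. On each kind the
two components of the Jacobi identity are exactly two of the hypotheses: `(a, b, c)` gives (CC6)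
together with the Jacobi identity of `A`, and (CC2); `(a, b, h)` gives (TBB1) and (TM2);
`(h, g, a)` gives (TM1) and (TBB2); `(h, g, e)` gives (CC1) and (CC5).

The direct sum cobracket makes `A` and `H` sub-Lie coalgebras. The compatibility (LB) is checked
on the four blocks `X ⊗ Y` of `(A ⊕ H) ⊗ (A ⊕ H)`: on `A ⊗ A` and `H ⊗ H` it is (LB) for `A` and
`H` combined with the formulas for `δ_A(h ▷ a)`, `δ_H(h ◁ a)`, `δ_A σ = 0` and `δ_H θ = 0`; the
mixed blocks vanish by the three relations in `H ⊗ A`, transported to `A ⊗ H` by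
coanticommutativity.
-/

open TensorProduct

noncomputable section

variable {k : Type*} [Field k]
variable {A H : Type*} [AddCommGroup A] [Module k A] [AddCommGroup H] [Module k H]

/-- The cyclic rotation `ξ : u ⊗ v ⊗ w ↦ v ⊗ w ⊗ u` on `(L ⊗ L) ⊗ L`. -/
def ξmap (k L : Type*) [Field k] [AddCommGroup L] [Module k L] :
    ((L ⊗[k] L) ⊗[k] L) →ₗ[k] ((L ⊗[k] L) ⊗[k] L) :=
  (TensorProduct.comm k L (L ⊗[k] L)).toLinearMap ∘ₗ (TensorProduct.assoc k L L L).toLinearMap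

/-- Swap the last two tensor factors: `(m ⊗ n) ⊗ p ↦ (m ⊗ p) ⊗ n`. -/
def swapR (k M N P : Type*) [Field k] [AddCommGroup M] [Module k M] [AddCommGroup N]
    [Module k N] [AddCommGroup P] [Module k P] :
    ((M ⊗[k] N) ⊗[k] P) →ₗ[k] ((M ⊗[k] P) ⊗[k] N) :=
  (TensorProduct.assoc k M P N).symm.toLinearMap
    ∘ₗ TensorProduct.map LinearMap.id (TensorProduct.comm k N P).toLinearMap
    ∘ₗ (TensorProduct.assoc k M N P).toLinearMap

/-- A bilinear bracket is a Lie algebra structure: antisymmetry and the Jacobi identity. -/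
def IsLieAlg {L : Type*} [AddCommGroup L] [Module k L] (br : L →ₗ[k] L →ₗ[k] L) : Prop :=
  (∀ x y, br x y = - br y x) ∧
  (∀ x y z, br (br x y) z + br (br y z) x + br (br z x) y = 0)

/-- A cobracket is a Lie coalgebra structure: coanticommutativity `τ ∘ δ = −δ` and the
co-Jacobi identity `(id + ξ + ξ²) ∘ (δ ⊗ id) ∘ δ = 0`. -/
def IsLieCoalg {L : Type*} [AddCommGroup L] [Module k L] (δ : L →ₗ[k] L ⊗[k] L) : Prop :=
  (∀ x, TensorProduct.comm k L L (δ x) = - δ x) ∧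
  (∀ x, TensorProduct.map δ LinearMap.id (δ x)
      + ξmap k L (TensorProduct.map δ LinearMap.id (δ x))
      + ξmap k L (ξmap k L (TensorProduct.map δ LinearMap.id (δ x))) = 0)

/-- A Lie bialgebra: simultaneously a Lie algebra and a Lie coalgebra satisfying (LB):
`δ[x,y] = [x,y₁]⊗y₂ + y₁⊗[x,y₂] + x₁⊗[x₂,y] + [x₁,y]⊗x₂` (Sweedler notation). -/
def IsLieBialg {L : Type*} [AddCommGroup L] [Module k L]
    (br : L →ₗ[k] L →ₗ[k] L) (δ : L →ₗ[k] L ⊗[k] L) : Prop :=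
  IsLieAlg br ∧ IsLieCoalg δ ∧
  ∀ x y, δ (br x y)
      = TensorProduct.map (br x) LinearMap.id (δ y)
      + TensorProduct.map LinearMap.id (br x) (δ y)
      + TensorProduct.map LinearMap.id (br.flip y) (δ x)
      + TensorProduct.map (br.flip y) LinearMap.id (δ x)

/-- The bracket on the direct sum `A ⊕ H`:
`[(a,h),(b,g)] = ([a,b] + h▷b − g▷a + σ(h,g), [h,g] + h◁b − g◁a + θ(a,b))`. -/
def bbBracket (brA : A →ₗ[k] A →ₗ[k] A) (brH : H →ₗ[k] H →ₗ[k] H)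
    (r : H →ₗ[k] A →ₗ[k] A) (l : H →ₗ[k] A →ₗ[k] H)
    (σ : H →ₗ[k] H →ₗ[k] A) (θ : A →ₗ[k] A →ₗ[k] H) :
    (A × H) →ₗ[k] (A × H) →ₗ[k] (A × H) :=
  LinearMap.mk₂ k
    (fun x y => (brA x.1 y.1 + r x.2 y.1 - r y.2 x.1 + σ x.2 y.2,
                 brH x.2 y.2 + l x.2 y.1 - l y.2 x.1 + θ x.1 y.1))
    (fun x x' y => by
      simp only [Prod.fst_add, Prod.snd_add, map_add, LinearMap.add_apply, Prod.mk_add_mk,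
        Prod.mk.injEq]
      all_goals try (constructor <;> abel))
    (fun c x y => by
      simp only [Prod.smul_fst, Prod.smul_snd, map_smul, LinearMap.smul_apply, Prod.smul_mk,
        Prod.mk.injEq, smul_add, smul_sub]
      all_goals try (constructor <;> abel))
    (fun x y y' => by
      simp only [Prod.fst_add, Prod.snd_add, map_add, LinearMap.add_apply, Prod.mk_add_mk,
        Prod.mk.injEq]
      all_goals try (constructor <;> abel))
    (fun c x y => by
      simp only [Prod.smul_fst, Prod.smul_snd, map_smul, LinearMap.smul_apply, Prod.smul_mk,
        Prod.mk.injEq, smul_add, smul_sub]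
      all_goals try (constructor <;> abel))

/-- The cobracket on the direct sum `A ⊕ H`:
`δ_D(a) = δ_A(a) + φ(a) − τφ(a) + P(a)` and `δ_D(h) = δ_H(h) + ψ(h) − τψ(h) + Q(h)`,
all terms viewed inside `(A ⊕ H) ⊗ (A ⊕ H)`. -/
def bbCobracket (δA : A →ₗ[k] A ⊗[k] A) (δH : H →ₗ[k] H ⊗[k] H)
    (φ : A →ₗ[k] H ⊗[k] A) (ψ : H →ₗ[k] H ⊗[k] A)
    (P : A →ₗ[k] H ⊗[k] H) (Q : H →ₗ[k] A ⊗[k] A) :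
    (A × H) →ₗ[k] (A × H) ⊗[k] (A × H) :=
  (TensorProduct.map (LinearMap.inl k A H) (LinearMap.inl k A H) ∘ₗ δA
    + TensorProduct.map (LinearMap.inr k A H) (LinearMap.inl k A H) ∘ₗ φ
    - TensorProduct.map (LinearMap.inl k A H) (LinearMap.inr k A H)
        ∘ₗ (TensorProduct.comm k H A).toLinearMap ∘ₗ φ
    + TensorProduct.map (LinearMap.inr k A H) (LinearMap.inr k A H) ∘ₗ P) ∘ₗ LinearMap.fst k A H
  + (TensorProduct.map (LinearMap.inr k A H) (LinearMap.inr k A H) ∘ₗ δH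
    + TensorProduct.map (LinearMap.inr k A H) (LinearMap.inl k A H) ∘ₗ ψ
    - TensorProduct.map (LinearMap.inl k A H) (LinearMap.inr k A H)
        ∘ₗ (TensorProduct.comm k H A).toLinearMap ∘ₗ ψ
    + TensorProduct.map (LinearMap.inl k A H) (LinearMap.inl k A H) ∘ₗ Q) ∘ₗ LinearMap.snd k A H

section Jacobiator

variable {R L : Type*} [CommRing R] [AddCommGroup L] [Module R L] (br : L →ₗ[R] L →ₗ[R] L)

def jacobiator (x y z : L) : L := br (br x y) z + br (br y z) x + br (br z x) y

lemma jacobiator_cycle (x y z : L) : jacobiator br x y z = jacobiator br y z x := by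
  unfold jacobiator; abel

lemma jacobiator_add_left (x x' y z : L) :
    jacobiator br (x + x') y z = jacobiator br x y z + jacobiator br x' y z := by
  simp only [jacobiator, map_add, LinearMap.add_apply]; abel

lemma jacobiator_add_middle (x y y' z : L) :
    jacobiator br x (y + y') z = jacobiator br x y z + jacobiator br x y' z := by
  simp only [jacobiator, map_add, LinearMap.add_apply]; abel

lemma jacobiator_add_right (x y z z' : L) :
    jacobiator br x y (z + z') = jacobiator br x y z + jacobiator br x y z' := by
  simp only [jacobiator, map_add, LinearMap.add_apply]; abel

end Jacobiator

lemma jacobiator_prod_eq_zero {R M N : Type*} [CommRing R] [AddCommGroup M] [Module R M]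
    [AddCommGroup N] [Module R N] (br : M × N →ₗ[R] M × N →ₗ[R] M × N)
    (hMMM : ∀ a b c, jacobiator br (a, 0) (b, 0) (c, 0) = 0)
    (hMMN : ∀ a b e, jacobiator br (a, 0) (b, 0) (0, e) = 0)
    (hNNM : ∀ h g c, jacobiator br (0, h) (0, g) (c, 0) = 0)
    (hNNN : ∀ h g e, jacobiator br (0, h) (0, g) (0, e) = 0) (x y z : M × N) :
    jacobiator br x y z = 0 := by
  have hMNM : ∀ a g c, jacobiator br (a, 0) (0, g) (c, 0) = 0 := fun a g c => by
    rw [jacobiator_cycle, jacobiator_cycle, hMMN]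
  have hNMM : ∀ h b c, jacobiator br (0, h) (b, 0) (c, 0) = 0 := fun h b c => by
    rw [jacobiator_cycle, hMMN]
  have hNMN : ∀ h b e, jacobiator br (0, h) (b, 0) (0, e) = 0 := fun h b e => by
    rw [jacobiator_cycle, jacobiator_cycle, hNNM]
  have hMNN : ∀ a g e, jacobiator br (a, 0) (0, g) (0, e) = 0 := fun a g e => by
    rw [jacobiator_cycle, hNNM]
  have hsplit : ∀ p : M × N, p = (p.1, 0) + (0, p.2) := fun p => by simp
  rw [hsplit x, hsplit y, hsplit z]
  simp only [jacobiator_add_left, jacobiator_add_middle, jacobiator_add_right, hMMM, hMMN, hNNM,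
    hNNN, hMNM, hNMM, hNMN, hMNN, add_zero]

section TensorProduct

variable {R M N P Q : Type*} [CommRing R] [AddCommGroup M] [Module R M] [AddCommGroup N]
  [Module R N] [AddCommGroup P] [Module R P] [AddCommGroup Q] [Module R Q]

lemma TensorProduct.map_sub_left (f₁ f₂ : M →ₗ[R] P) (g : N →ₗ[R] Q) :
    map (f₁ - f₂) g = map f₁ g - map f₂ g := by
  ext; simp [sub_tmul]

lemma TensorProduct.map_sub_right (f : M →ₗ[R] P) (g₁ g₂ : N →ₗ[R] Q) :
    map f (g₁ - g₂) = map f g₁ - map f g₂ := by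
  ext; simp [tmul_sub]

lemma LinearMap.inl_comp_fst_add_inr_comp_snd :
    inl R M N ∘ₗ fst R M N + inr R M N ∘ₗ snd R M N = LinearMap.id := by
  ext <;> simp

lemma TensorProduct.prod_ext {t u : (M × N) ⊗[R] (P × Q)}
    (h₁₁ : map (LinearMap.fst R M N) (LinearMap.fst R P Q) t
      = map (LinearMap.fst R M N) (LinearMap.fst R P Q) u)
    (h₁₂ : map (LinearMap.fst R M N) (LinearMap.snd R P Q) t
      = map (LinearMap.fst R M N) (LinearMap.snd R P Q) u)
    (h₂₁ : map (LinearMap.snd R M N) (LinearMap.fst R P Q) t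
      = map (LinearMap.snd R M N) (LinearMap.fst R P Q) u)
    (h₂₂ : map (LinearMap.snd R M N) (LinearMap.snd R P Q) t
      = map (LinearMap.snd R M N) (LinearMap.snd R P Q) u) : t = u := by
  have hblocks : ∀ s : (M × N) ⊗[R] (P × Q), s
      = map (LinearMap.inl R M N) (LinearMap.inl R P Q)
          (map (LinearMap.fst R M N) (LinearMap.fst R P Q) s)
        + map (LinearMap.inl R M N) (LinearMap.inr R P Q)
          (map (LinearMap.fst R M N) (LinearMap.snd R P Q) s)
        + map (LinearMap.inr R M N) (LinearMap.inl R P Q)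
          (map (LinearMap.snd R M N) (LinearMap.fst R P Q) s)
        + map (LinearMap.inr R M N) (LinearMap.inr R P Q)
          (map (LinearMap.snd R M N) (LinearMap.snd R P Q) s) := fun s => by
    conv_lhs => rw [← LinearMap.id_apply (R := R) s, ← map_id,
      ← LinearMap.inl_comp_fst_add_inr_comp_snd, ← LinearMap.inl_comp_fst_add_inr_comp_snd]
    simp only [map_add_left, map_add_right, map_comp, LinearMap.add_apply, LinearMap.comp_apply]
    abel
  rw [hblocks t, hblocks u, h₁₁, h₁₂, h₂₁, h₂₂]

lemma map_add_map_eq_zero_comm {t : M ⊗[R] M} {u : N ⊗[R] N}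
    (ht : TensorProduct.comm R M M t = -t) (hu : TensorProduct.comm R N N u = -u)
    {f : M →ₗ[R] P} {g : M →ₗ[R] Q} {f' : N →ₗ[R] P} {g' : N →ₗ[R] Q}
    (h : map f g t + map f' g' u = 0) : map g f t + map g' f' u = 0 := by
  have h' := congrArg (TensorProduct.comm R P Q) h
  rwa [map_add, ← map_comm, ← map_comm, ht, hu, map_neg, map_neg, ← neg_add, map_zero,
    neg_eq_zero] at h'

end TensorProduct

section Coalgebra

variable {L D : Type*} [AddCommGroup L] [Module k L] [AddCommGroup D] [Module k D]

def coJacobiator (δ : L →ₗ[k] L ⊗[k] L) (x : L) : (L ⊗[k] L) ⊗[k] L :=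
  map δ LinearMap.id (δ x) + ξmap k L (map δ LinearMap.id (δ x))
    + ξmap k L (ξmap k L (map δ LinearMap.id (δ x)))

lemma isLieCoalg_iff (δ : L →ₗ[k] L ⊗[k] L) :
    IsLieCoalg δ ↔ (∀ x, TensorProduct.comm k L L (δ x) = -δ x) ∧ ∀ x, coJacobiator δ x = 0 :=
  Iff.rfl

lemma coJacobiator_add (δ : L →ₗ[k] L ⊗[k] L) (x y : L) :
    coJacobiator δ (x + y) = coJacobiator δ x + coJacobiator δ y := by
  simp only [coJacobiator, map_add]; abel

lemma ξmap_map (j : L →ₗ[k] D) (s : (L ⊗[k] L) ⊗[k] L) :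
    ξmap k D (map (map j j) j s) = map (map j j) j (ξmap k L s) := by
  have hcomp : ξmap k D ∘ₗ map (map j j) j = map (map j j) j ∘ₗ ξmap k L := by
    ext; simp [ξmap]
  exact LinearMap.congr_fun hcomp s

variable {δL : L →ₗ[k] L ⊗[k] L} {δD : D →ₗ[k] D ⊗[k] D} {j : L →ₗ[k] D}

lemma comm_apply_of_apply_eq (hj : ∀ x, δD (j x) = map j j (δL x)) (x : L) :
    TensorProduct.comm k D D (δD (j x)) = map j j (TensorProduct.comm k L L (δL x)) := by
  rw [hj, map_comm]

lemma coJacobiator_apply_of_apply_eq (hj : ∀ x, δD (j x) = map j j (δL x)) (x : L) :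
    coJacobiator δD (j x) = map (map j j) j (coJacobiator δL x) := by
  have hδD : δD ∘ₗ j = map j j ∘ₗ δL := LinearMap.ext hj
  have hs : map δD LinearMap.id (δD (j x)) = map (map j j) j (map δL LinearMap.id (δL x)) := by
    rw [hj, map_map, map_map, hδD]
    rfl
  simp only [coJacobiator, hs, ξmap_map, map_add]

end Coalgebra

def IsLieBialgCompatible {L : Type*} [AddCommGroup L] [Module k L]
    (br : L →ₗ[k] L →ₗ[k] L) (δ : L →ₗ[k] L ⊗[k] L) : Prop :=
  ∀ x y, δ (br x y)
      = map (br x) LinearMap.id (δ y) + map LinearMap.id (br x) (δ y)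
      + map LinearMap.id (br.flip y) (δ x) + map (br.flip y) LinearMap.id (δ x)

section DoubleCrossProduct

variable {brA : A →ₗ[k] A →ₗ[k] A} {brH : H →ₗ[k] H →ₗ[k] H}
  {r : H →ₗ[k] A →ₗ[k] A} {l : H →ₗ[k] A →ₗ[k] H}
  {σ : H →ₗ[k] H →ₗ[k] A} {θ : A →ₗ[k] A →ₗ[k] H}
  {δA : A →ₗ[k] A ⊗[k] A} {δH : H →ₗ[k] H ⊗[k] H}

variable (brA brH r l σ θ) in
structure IsCocycleCrossProductSystem : Prop where
  σ_antisymm : ∀ h g, σ h g = -σ g h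
  θ_antisymm : ∀ a b, θ a b = -θ b a
  cc1 : ∀ h g e, r h (σ g e) + r g (σ e h) + r e (σ h g)
    = σ (brH h g) e + σ (brH g e) h + σ (brH e h) g
  cc2 : ∀ a b c, l (θ a b) c + l (θ b c) a + l (θ c a) b
    = θ a (brA b c) + θ b (brA c a) + θ c (brA a b)
  cc5 : ∀ h g e, brH (brH h g) e + brH (brH g e) h + brH (brH e h) g
    = l h (σ g e) + l g (σ e h) + l e (σ h g)
  cc6 : ∀ a b c, brA (brA a b) c + brA (brA b c) a + brA (brA c a) b
    = r (θ a b) c + r (θ b c) a + r (θ c a) b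
  tm1 : ∀ h g a, r (brH h g) a + brA (σ h g) a
    = r h (r g a) - r g (r h a) + σ h (l g a) + σ (l h a) g
  tm2 : ∀ h a b, l h (brA a b) + brH h (θ a b)
    = l (l h a) b - l (l h b) a + θ (r h a) b + θ a (r h b)
  tbb1 : ∀ h a b, r h (brA a b) + σ h (θ a b)
    = brA (r h a) b + brA a (r h b) + r (l h a) b - r (l h b) a
  tbb2 : ∀ h g a, l (brH h g) a + θ (σ h g) a
    = brH h (l g a) + brH (l h a) g + l h (r g a) - l g (r h a)

variable (r l σ θ δA δH) in
structure IsDoubleCocycleCompatible : Prop where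
  map_act_add_map_act : ∀ h a,
    map LinearMap.id (r.flip a) (δH h) + map (l h) LinearMap.id (δA a) = 0
  δA_act : ∀ h a, δA (r h a) = map (r h) LinearMap.id (δA a) + map LinearMap.id (r h) (δA a)
  δH_act : ∀ h a, δH (l h a)
    = map LinearMap.id (l.flip a) (δH h) + map (l.flip a) LinearMap.id (δH h)
  map_θ_add_map_θ : ∀ a b, map (θ a) LinearMap.id (δA b) + map (θ.flip b) LinearMap.id (δA a) = 0
  map_σ_add_map_σ : ∀ h g,
    map LinearMap.id (σ.flip g) (δH h) + map LinearMap.id (σ h) (δH g) = 0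
  δH_θ : ∀ a b, δH (θ a b) = 0
  δA_σ : ∀ h g, δA (σ h g) = 0

variable (brA brH r l σ θ) in
@[simp]
lemma bbBracket_apply (x y : A × H) : bbBracket brA brH r l σ θ x y =
    (brA x.1 y.1 + r x.2 y.1 - r y.2 x.1 + σ x.2 y.2,
      brH x.2 y.2 + l x.2 y.1 - l y.2 x.1 + θ x.1 y.1) := rfl

@[simp]
lemma bbCobracket_zero_apply (x : A × H) : bbCobracket δA δH 0 0 0 0 x
    = map (LinearMap.inl k A H) (LinearMap.inl k A H) (δA x.1)
      + map (LinearMap.inr k A H) (LinearMap.inr k A H) (δH x.2) := by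
  simp [bbCobracket]

lemma bbBracket_antisymm (hA : ∀ a b, brA a b = -brA b a) (hH : ∀ h g, brH h g = -brH g h)
    (hS : IsCocycleCrossProductSystem brA brH r l σ θ) (x y : A × H) :
    bbBracket brA brH r l σ θ x y = -bbBracket brA brH r l σ θ y x := by
  simp only [bbBracket_apply, Prod.neg_mk, Prod.mk.injEq, hA x.1, hH x.2, hS.σ_antisymm x.2,
    hS.θ_antisymm x.1]
  constructor <;> abel

lemma jacobiator_bbBracket_inl_inl_inl (hA : IsLieAlg brA)
    (hS : IsCocycleCrossProductSystem brA brH r l σ θ) (a b c : A) :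
    jacobiator (bbBracket brA brH r l σ θ) (a, 0) (b, 0) (c, 0) = 0 := by
  simp only [jacobiator, bbBracket_apply, map_zero, LinearMap.zero_apply, add_zero, sub_zero,
    sub_self, zero_add, Prod.mk_add_mk, Prod.ext_iff, Prod.fst_zero, Prod.snd_zero]
  constructor
  · linear_combination (norm := abel) 2 • hA.2 a b c - hS.cc6 a b c
  · linear_combination (norm := abel) hS.cc2 a b c + hS.θ_antisymm (brA b c) a
      + hS.θ_antisymm (brA c a) b + hS.θ_antisymm (brA a b) c

lemma jacobiator_bbBracket_inl_inl_inr (hA : ∀ a b, brA a b = -brA b a)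
    (hH : ∀ h g, brH h g = -brH g h) (hS : IsCocycleCrossProductSystem brA brH r l σ θ)
    (a b : A) (e : H) :
    jacobiator (bbBracket brA brH r l σ θ) (a, 0) (b, 0) (0, e) = 0 := by
  simp only [jacobiator, bbBracket_apply, map_zero, LinearMap.zero_apply, add_zero, sub_zero,
    sub_self, zero_add, zero_sub, map_neg, LinearMap.neg_apply, neg_zero, Prod.mk_add_mk,
    Prod.ext_iff, Prod.fst_zero, Prod.snd_zero]
  constructor
  · linear_combination (norm := abel) -hS.tbb1 e a b + hS.σ_antisymm (θ a b) e - hA (r e b) a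
  · linear_combination (norm := abel) -hS.tm2 e a b + hH (θ a b) e - hS.θ_antisymm (r e b) a

lemma jacobiator_bbBracket_inr_inr_inl (hH : ∀ h g, brH h g = -brH g h)
    (hS : IsCocycleCrossProductSystem brA brH r l σ θ) (h g : H) (c : A) :
    jacobiator (bbBracket brA brH r l σ θ) (0, h) (0, g) (c, 0) = 0 := by
  simp only [jacobiator, bbBracket_apply, map_zero, LinearMap.zero_apply, add_zero, sub_self,
    zero_add, sub_zero, zero_sub, Prod.mk_add_mk, map_neg, LinearMap.neg_apply, sub_neg_eq_add,
    Prod.ext_iff, Prod.fst_zero, Prod.snd_zero]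
  constructor
  · linear_combination (norm := abel) hS.tm1 h g c + hS.σ_antisymm (l g c) h
  · linear_combination (norm := abel) hS.tbb2 h g c + hH (l g c) h

lemma jacobiator_bbBracket_inr_inr_inr (hS : IsCocycleCrossProductSystem brA brH r l σ θ)
    (h g e : H) : jacobiator (bbBracket brA brH r l σ θ) (0, h) (0, g) (0, e) = 0 := by
  simp only [jacobiator, bbBracket_apply, map_zero, add_zero, sub_self, zero_add, sub_zero,
    zero_sub, Prod.mk_add_mk, Prod.ext_iff, Prod.fst_zero, Prod.snd_zero]
  constructor
  · linear_combination (norm := abel) -hS.cc1 h g e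
  · linear_combination (norm := abel) hS.cc5 h g e

lemma isLieAlg_bbBracket (hA : IsLieAlg brA) (hH : ∀ h g, brH h g = -brH g h)
    (hS : IsCocycleCrossProductSystem brA brH r l σ θ) :
    IsLieAlg (bbBracket brA brH r l σ θ) :=
  ⟨bbBracket_antisymm hA.1 hH hS,
    jacobiator_prod_eq_zero _ (jacobiator_bbBracket_inl_inl_inl hA hS)
      (jacobiator_bbBracket_inl_inl_inr hA.1 hH hS) (jacobiator_bbBracket_inr_inr_inl hH hS)
      (jacobiator_bbBracket_inr_inr_inr hS)⟩

lemma isLieCoalg_bbCobracket_zero (hA : IsLieCoalg δA) (hH : IsLieCoalg δH) :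
    IsLieCoalg (bbCobracket δA δH 0 0 0 0) := by
  rw [isLieCoalg_iff] at *
  have hinl : ∀ a, bbCobracket δA δH 0 0 0 0 (LinearMap.inl k A H a)
      = map (LinearMap.inl k A H) (LinearMap.inl k A H) (δA a) := by simp
  have hinr : ∀ h, bbCobracket δA δH 0 0 0 0 (LinearMap.inr k A H h)
      = map (LinearMap.inr k A H) (LinearMap.inr k A H) (δH h) := by simp
  have hsplit : ∀ x : A × H, x = LinearMap.inl k A H x.1 + LinearMap.inr k A H x.2 := by simp
  refine ⟨fun x => ?_, fun x => ?_⟩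
  · rw [hsplit x, map_add, map_add, comm_apply_of_apply_eq hinl, comm_apply_of_apply_eq hinr,
      hA.1, hH.1, map_neg, map_neg, neg_add, hinl, hinr]
  · rw [hsplit x, coJacobiator_add, coJacobiator_apply_of_apply_eq hinl,
      coJacobiator_apply_of_apply_eq hinr, hA.2, hH.2, map_zero, map_zero, add_zero]

lemma bbBracket_comp_inl (x : A × H) : bbBracket brA brH r l σ θ x ∘ₗ LinearMap.inl k A H
    = (brA x.1 + r x.2).prod (l x.2 + θ x.1) := by
  ext c : 1; simp [sub_eq_add_neg, add_comm]

lemma bbBracket_comp_inr (x : A × H) : bbBracket brA brH r l σ θ x ∘ₗ LinearMap.inr k A H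
    = (σ x.2 - r.flip x.1).prod (brH x.2 - l.flip x.1) := by
  ext c : 1; simp [sub_eq_add_neg, add_comm]

lemma bbBracket_flip_comp_inl (y : A × H) :
    (bbBracket brA brH r l σ θ).flip y ∘ₗ LinearMap.inl k A H
      = (brA.flip y.1 - r y.2).prod (θ.flip y.1 - l y.2) := by
  ext c : 1; simp [sub_eq_add_neg, add_comm]

lemma bbBracket_flip_comp_inr (y : A × H) :
    (bbBracket brA brH r l σ θ).flip y ∘ₗ LinearMap.inr k A H
      = (r.flip y.1 + σ.flip y.2).prod (brH.flip y.2 + l.flip y.1) := by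
  ext c : 1; simp [sub_eq_add_neg, add_comm]

lemma isLieBialgCompatible_bbBracket_bbCobracket_zero
    (hδA : ∀ a, TensorProduct.comm k A A (δA a) = -δA a)
    (hδH : ∀ h, TensorProduct.comm k H H (δH h) = -δH h)
    (hA : IsLieBialgCompatible brA δA) (hH : IsLieBialgCompatible brH δH)
    (hC : IsDoubleCocycleCompatible r l σ θ δA δH) :
    IsLieBialgCompatible (bbBracket brA brH r l σ θ) (bbCobracket δA δH 0 0 0 0) := by
  rintro ⟨a, h⟩ ⟨b, g⟩
  apply TensorProduct.prod_ext
  all_goals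
    simp only [bbCobracket_zero_apply, map_add, map_map, LinearMap.id_comp,
      bbBracket_comp_inl, bbBracket_comp_inr, bbBracket_flip_comp_inl, bbBracket_flip_comp_inr,
      LinearMap.fst_prod, LinearMap.snd_prod, LinearMap.fst_comp_inl, LinearMap.snd_comp_inl,
      LinearMap.fst_comp_inr, LinearMap.snd_comp_inr, map_zero_left, map_zero_right,
      LinearMap.zero_apply, map_id, LinearMap.id_apply, add_zero, zero_add, sub_self,
      bbBracket_apply, map_sub, map_add_left, map_add_right, map_sub_left, map_sub_right,
      LinearMap.add_apply, LinearMap.sub_apply]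
  · linear_combination (norm := abel) hA a b + hC.δA_act h b - hC.δA_act g a + hC.δA_σ h g
  · linear_combination (norm := abel)
      -map_add_map_eq_zero_comm (hδH h) (hδA b) (hC.map_act_add_map_act h b)
      + map_add_map_eq_zero_comm (hδH g) (hδA a) (hC.map_act_add_map_act g a)
      - map_add_map_eq_zero_comm (hδA b) (hδA a) (hC.map_θ_add_map_θ a b)
      - map_add_map_eq_zero_comm (hδH h) (hδH g) (hC.map_σ_add_map_σ h g)
  · linear_combination (norm := abel)
      -hC.map_act_add_map_act h b + hC.map_act_add_map_act g a
      - hC.map_θ_add_map_θ a b - hC.map_σ_add_map_σ h g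
  · linear_combination (norm := abel) hH h g + hC.δH_act h b - hC.δH_act g a + hC.δH_θ a b

end DoubleCrossProduct

theorem double_cocycle_cross_product_is_lie_bialgebra_general
    (brA : A →ₗ[k] A →ₗ[k] A) (δA : A →ₗ[k] A ⊗[k] A)
    (brH : H →ₗ[k] H →ₗ[k] H) (δH : H →ₗ[k] H ⊗[k] H)
    (r : H →ₗ[k] A →ₗ[k] A) (l : H →ₗ[k] A →ₗ[k] H)
    (σ : H →ₗ[k] H →ₗ[k] A) (θ : A →ₗ[k] A →ₗ[k] H)
    (hA : IsLieBialg brA δA) (hH : IsLieBialg brH δH)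
    -- antisymmetry of the brackets and cocycles
    (hskσ : ∀ x y, σ x y = - σ y x)
    (hskθ : ∀ a b, θ a b = - θ b a)
    -- (CC1) : `h ▷ σ(g,e) + g ▷ σ(e,h) + e ▷ σ(h,g) = σ([h,g],e) + σ([g,e],h) + σ([e,h],g)`
    (hCC1 : ∀ h g e, r h (σ g e) + r g (σ e h) + r e (σ h g)
        = σ (brH h g) e + σ (brH g e) h + σ (brH e h) g)
    -- (CC2) : `θ(a,b)◁c + θ(b,c)◁a + θ(c,a)◁b = θ(a,[b,c]) + θ(b,[c,a]) + θ(c,[a,b])`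
    (hCC2 : ∀ a b c, l (θ a b) c + l (θ b c) a + l (θ c a) b
        = θ a (brA b c) + θ b (brA c a) + θ c (brA a b))
    -- (CC5) : `[[h,g],e] + [[g,e],h] + [[e,h],g] = h◁σ(g,e) + g◁σ(e,h) + e◁σ(h,g)`
    (hCC5 : ∀ h g e, brH (brH h g) e + brH (brH g e) h + brH (brH e h) g
        = l h (σ g e) + l g (σ e h) + l e (σ h g))
    -- (CC6) : `[[a,b],c] + [[b,c],a] + [[c,a],b] = θ(a,b)▷c + θ(b,c)▷a + θ(c,a)▷b`
    (hCC6 : ∀ a b c, brA (brA a b) c + brA (brA b c) a + brA (brA c a) b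
        = r (θ a b) c + r (θ b c) a + r (θ c a) b)
    -- (TM1) : `[h,g]▷a + [σ(h,g),a] = h▷(g▷a) − g▷(h▷a) + σ(h, g◁a) + σ(h◁a, g)`
    (hTM1 : ∀ h g a, r (brH h g) a + brA (σ h g) a
        = r h (r g a) - r g (r h a) + σ h (l g a) + σ (l h a) g)
    -- (TM2) : `h◁[a,b] + [h,θ(a,b)] = (h◁a)◁b − (h◁b)◁a + θ(h▷a, b) + θ(a, h▷b)`
    (hTM2 : ∀ h a b, l h (brA a b) + brH h (θ a b)
        = l (l h a) b - l (l h b) a + θ (r h a) b + θ a (r h b))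
    -- (TBB1) : `h▷[a,b] + σ(h,θ(a,b)) = [h▷a, b] + [a, h▷b] + (h◁a)▷b − (h◁b)▷a`
    (hTBB1 : ∀ h a b, r h (brA a b) + σ h (θ a b)
        = brA (r h a) b + brA a (r h b) + r (l h a) b - r (l h b) a)
    -- (TBB2) : `[h,g]◁a + θ(σ(h,g),a) = [h, g◁a] + [h◁a, g] + h◁(g▷a) − g◁(h▷a)`
    (hTBB2 : ∀ h g a, l (brH h g) a + θ (σ h g) a
        = brH h (l g a) + brH (l h a) g + l h (r g a) - l g (r h a))
    -- `h₁ ⊗ h₂▷a + h◁a₁ ⊗ a₂ = 0` in `H ⊗ A`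
    (hAA : ∀ h a, TensorProduct.map LinearMap.id (r.flip a) (δH h)
        + TensorProduct.map (l h) LinearMap.id (δA a) = 0)
    -- `δ_A(h▷a) = h▷a₁ ⊗ a₂ + a₁ ⊗ h▷a₂`
    (hδr : ∀ h a, δA (r h a)
        = TensorProduct.map (r h) LinearMap.id (δA a)
        + TensorProduct.map LinearMap.id (r h) (δA a))
    -- `δ_H(h◁a) = h₁ ⊗ h₂◁a + h₁◁a ⊗ h₂`
    (hδl : ∀ h a, δH (l h a)
        = TensorProduct.map LinearMap.id (l.flip a) (δH h)
        + TensorProduct.map (l.flip a) LinearMap.id (δH h))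
    -- `θ(a,b₁) ⊗ b₂ + θ(a₁,b) ⊗ a₂ = 0` in `H ⊗ A`
    (hθδ : ∀ a b, TensorProduct.map (θ a) LinearMap.id (δA b)
        + TensorProduct.map (θ.flip b) LinearMap.id (δA a) = 0)
    -- `h₁ ⊗ σ(h₂,g) + g₁ ⊗ σ(h,g₂) = 0` in `H ⊗ A`
    (hσδ : ∀ h g, TensorProduct.map LinearMap.id (σ.flip g) (δH h)
        + TensorProduct.map LinearMap.id (σ h) (δH g) = 0)
    -- `δ_H(θ(a,b)) = 0`
    (hδθ : ∀ a b, δH (θ a b) = 0)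
    -- `δ_A(σ(h,g)) = 0`
    (hδσ : ∀ h g, δA (σ h g) = 0) :
    IsLieBialg (bbBracket brA brH r l σ θ) (bbCobracket δA δH 0 0 0 0) := by
  obtain ⟨lieA, coA, lbA⟩ := hA
  obtain ⟨lieH, coH, lbH⟩ := hH
  have hS : IsCocycleCrossProductSystem brA brH r l σ θ :=
    ⟨hskσ, hskθ, hCC1, hCC2, hCC5, hCC6, hTM1, hTM2, hTBB1, hTBB2⟩
  have hC : IsDoubleCocycleCompatible r l σ θ δA δH := ⟨hAA, hδr, hδl, hθδ, hσδ, hδθ, hδσ⟩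
  exact ⟨isLieAlg_bbBracket lieA lieH.1 hS, isLieCoalg_bbCobracket_zero coA coH,
    isLieBialgCompatible_bbBracket_bbCobracket_zero coA.1 coH.1 lbA lbH hC⟩

/-- Given Lie bialgebras `A`, `H` and a cocycle cross product system
`(A, H, ▷, ◁, σ, θ)` satisfying the additional compatibilities below, the double cocycle
cross product `A_{▷,θ} # _{◁,σ} H` (cocycle bracket, direct sum cobracket) is a Lie
bialgebra. -/
theorem double_cocycle_cross_product_is_lie_bialgebra [CharZero k]
    (brA : A →ₗ[k] A →ₗ[k] A) (δA : A →ₗ[k] A ⊗[k] A)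
    (brH : H →ₗ[k] H →ₗ[k] H) (δH : H →ₗ[k] H ⊗[k] H)
    (r : H →ₗ[k] A →ₗ[k] A) (l : H →ₗ[k] A →ₗ[k] H)
    (σ : H →ₗ[k] H →ₗ[k] A) (θ : A →ₗ[k] A →ₗ[k] H)
    (hA : IsLieBialg brA δA) (hH : IsLieBialg brH δH)
    -- antisymmetry of the brackets and cocycles
    (hskA : ∀ a b, brA a b = - brA b a)
    (hskH : ∀ x y, brH x y = - brH y x)
    (hskσ : ∀ x y, σ x y = - σ y x)
    (hskθ : ∀ a b, θ a b = - θ b a)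
    -- (CC1) : `h ▷ σ(g,e) + g ▷ σ(e,h) + e ▷ σ(h,g) = σ([h,g],e) + σ([g,e],h) + σ([e,h],g)`
    (hCC1 : ∀ h g e, r h (σ g e) + r g (σ e h) + r e (σ h g)
        = σ (brH h g) e + σ (brH g e) h + σ (brH e h) g)
    -- (CC2) : `θ(a,b)◁c + θ(b,c)◁a + θ(c,a)◁b = θ(a,[b,c]) + θ(b,[c,a]) + θ(c,[a,b])`
    (hCC2 : ∀ a b c, l (θ a b) c + l (θ b c) a + l (θ c a) b
        = θ a (brA b c) + θ b (brA c a) + θ c (brA a b))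
    -- (CC5) : `[[h,g],e] + [[g,e],h] + [[e,h],g] = h◁σ(g,e) + g◁σ(e,h) + e◁σ(h,g)`
    (hCC5 : ∀ h g e, brH (brH h g) e + brH (brH g e) h + brH (brH e h) g
        = l h (σ g e) + l g (σ e h) + l e (σ h g))
    -- (CC6) : `[[a,b],c] + [[b,c],a] + [[c,a],b] = θ(a,b)▷c + θ(b,c)▷a + θ(c,a)▷b`
    (hCC6 : ∀ a b c, brA (brA a b) c + brA (brA b c) a + brA (brA c a) b
        = r (θ a b) c + r (θ b c) a + r (θ c a) b)
    -- (TM1) : `[h,g]▷a + [σ(h,g),a] = h▷(g▷a) − g▷(h▷a) + σ(h, g◁a) + σ(h◁a, g)`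
    (hTM1 : ∀ h g a, r (brH h g) a + brA (σ h g) a
        = r h (r g a) - r g (r h a) + σ h (l g a) + σ (l h a) g)
    -- (TM2) : `h◁[a,b] + [h,θ(a,b)] = (h◁a)◁b − (h◁b)◁a + θ(h▷a, b) + θ(a, h▷b)`
    (hTM2 : ∀ h a b, l h (brA a b) + brH h (θ a b)
        = l (l h a) b - l (l h b) a + θ (r h a) b + θ a (r h b))
    -- (TBB1) : `h▷[a,b] + σ(h,θ(a,b)) = [h▷a, b] + [a, h▷b] + (h◁a)▷b − (h◁b)▷a`
    (hTBB1 : ∀ h a b, r h (brA a b) + σ h (θ a b)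
        = brA (r h a) b + brA a (r h b) + r (l h a) b - r (l h b) a)
    -- (TBB2) : `[h,g]◁a + θ(σ(h,g),a) = [h, g◁a] + [h◁a, g] + h◁(g▷a) − g◁(h▷a)`
    (hTBB2 : ∀ h g a, l (brH h g) a + θ (σ h g) a
        = brH h (l g a) + brH (l h a) g + l h (r g a) - l g (r h a))
    -- `h₁ ⊗ h₂▷a + h◁a₁ ⊗ a₂ = 0` in `H ⊗ A`
    (hAA : ∀ h a, TensorProduct.map LinearMap.id (r.flip a) (δH h)
        + TensorProduct.map (l h) LinearMap.id (δA a) = 0)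
    -- `δ_A(h▷a) = h▷a₁ ⊗ a₂ + a₁ ⊗ h▷a₂`
    (hδr : ∀ h a, δA (r h a)
        = TensorProduct.map (r h) LinearMap.id (δA a)
        + TensorProduct.map LinearMap.id (r h) (δA a))
    -- `δ_H(h◁a) = h₁ ⊗ h₂◁a + h₁◁a ⊗ h₂`
    (hδl : ∀ h a, δH (l h a)
        = TensorProduct.map LinearMap.id (l.flip a) (δH h)
        + TensorProduct.map (l.flip a) LinearMap.id (δH h))
    -- `θ(a,b₁) ⊗ b₂ + θ(a₁,b) ⊗ a₂ = 0` in `H ⊗ A`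
    (hθδ : ∀ a b, TensorProduct.map (θ a) LinearMap.id (δA b)
        + TensorProduct.map (θ.flip b) LinearMap.id (δA a) = 0)
    -- `h₁ ⊗ σ(h₂,g) + g₁ ⊗ σ(h,g₂) = 0` in `H ⊗ A`
    (hσδ : ∀ h g, TensorProduct.map LinearMap.id (σ.flip g) (δH h)
        + TensorProduct.map LinearMap.id (σ h) (δH g) = 0)
    -- `δ_H(θ(a,b)) = 0`
    (hδθ : ∀ a b, δH (θ a b) = 0)
    -- `δ_A(σ(h,g)) = 0`
    (hδσ : ∀ h g, δA (σ h g) = 0) :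
    IsLieBialg (bbBracket brA brH r l σ θ) (bbCobracket δA δH 0 0 0 0) :=
  double_cocycle_cross_product_is_lie_bialgebra_general brA δA brH δH r l σ θ hA hH hskσ hskθ hCC1
    hCC2 hCC5 hCC6 hTM1 hTM2 hTBB1 hTBB2 hAA hδr hδl hθδ hσδ hδθ hδσ

end
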